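/- arXiv:1801.00575 — 2 statements merged into one kernel-verified Lean document; each statement's English description precedes it below -/
import Mathlib

section
/- Let M ≥ 1, ν₀ < 0, ω > 0, r > 0, c₁, c₂ ≥ 0, a₁, ..., a_p ≥ 0, and suppose (c₁ + c₂ e^{-ν₀ r}) + (1/ω)∑_{k=1}^p a_k < |ν₀|/M. Then σ := -ν₀ - (M/ω)∑_{k=1}^{p} a_k - M(c₁ + c₂ e^{-ν₀ r}) > 0, and if a function Δ : [0,∞) → [0,∞) satisfies Δ(t) ≤ C ∏_{0 < t_k < t}(1 + M a_k) e^{(M(c₁ + c₂ e^{-ν₀ r}) + ν₀) t} for all t ≥ 0, where the impulse times satisfy t_{k+p} = t_k + ω with 0 < t₁ < ⋯ < t_p < ω and a_k is p-periodic, then Δ(t) ≤ C' e^{-σ' t} for some constant C' ≥ 0 and some σ' > 0; in particular Δ(t) → 0 as t → ∞. -/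
/-!
Since `1 + x ≤ eˣ`, the product `∏_{t_k<t} (1 + M a_k)` is at most `exp (M ∑_{t_k<t} a_k)`.
The impulse points below `t` lie in the first `⌈t/ω⌉` periods, so by periodicity that sum is at
most `(t/ω + 1) ∑_{k<p} a_k`. The product thus grows at rate at most `(M/ω) ∑_{k<p} a_k`, which
the exponent absorbs, leaving the decay `C e^{M ∑_{k<p} a_k} e^{-σt}`.
-/

open Finset Filter Topology Real

theorem Function.Periodic.sum_range_mul {M : Type*} [AddCommMonoid M] {f : ℕ → M} {p : ℕ}
    (hf : Function.Periodic f p) (n : ℕ) :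
    ∑ k ∈ range (n * p), f k = n • ∑ k ∈ range p, f k := by
  induction n with
  | zero => simp
  | succ n ih =>
    rw [add_mul, one_mul, sum_range_add, ih, succ_nsmul]
    congr 1
    refine sum_congr rfl fun j _ => ?_
    simpa [add_comm] using hf.nat_mul n j

section ImpulseTimes

variable {τ : ℕ → ℝ} {p : ℕ} {ω : ℝ}

theorem add_mul_period_eq (hτ : ∀ k, τ (k + p) = τ k + ω) (j n : ℕ) :
    τ (j + n * p) = τ j + n * ω := by
  induction n with
  | zero => simp
  | succ n ih =>
    rw [add_mul, one_mul, ← add_assoc, hτ, ih]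
    push_cast
    ring

theorem div_mul_period_le (hp : 0 < p) (h₀ : ∀ k < p, 0 ≤ τ k)
    (hτ : ∀ k, τ (k + p) = τ k + ω) (k : ℕ) : ((k / p : ℕ) : ℝ) * ω ≤ τ k := by
  have hk : τ k = τ (k % p) + (k / p : ℕ) * ω := by
    conv_lhs => rw [← Nat.mod_add_div' k p]
    exact add_mul_period_eq hτ _ _
  linarith [h₀ _ (Nat.mod_lt k hp)]

theorem setOf_lt_subset_range (hp : 0 < p) (hω : 0 < ω) (h₀ : ∀ k < p, 0 ≤ τ k)
    (hτ : ∀ k, τ (k + p) = τ k + ω) (s : ℝ) :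
    {k | τ k < s} ⊆ range (⌈s / ω⌉₊ * p) := by
  intro k hk
  have hkp : ((k / p : ℕ) : ℝ) < s / ω :=
    (lt_div_iff₀ hω).mpr ((div_mul_period_le hp h₀ hτ k).trans_lt hk)
  simpa [← Nat.div_lt_iff_lt_mul hp] using Nat.lt_ceil.mpr hkp

theorem sum_setOf_lt_le {a : ℕ → ℝ} (hp : 0 < p) (hω : 0 < ω) (h₀ : ∀ k < p, 0 ≤ τ k)
    (hτ : ∀ k, τ (k + p) = τ k + ω) (ha : ∀ k, 0 ≤ a k) (haper : Function.Periodic a p)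
    {s : ℝ} (hs : 0 ≤ s) (hfin : {k | τ k < s}.Finite) :
    ∑ k ∈ hfin.toFinset, a k ≤ (s / ω + 1) * ∑ k ∈ range p, a k := by
  calc ∑ k ∈ hfin.toFinset, a k ≤ ∑ k ∈ range (⌈s / ω⌉₊ * p), a k :=
        sum_le_sum_of_subset_of_nonneg
          (hfin.toFinset_subset.mpr (setOf_lt_subset_range hp hω h₀ hτ s)) fun k _ _ => ha k
    _ = ⌈s / ω⌉₊ * ∑ k ∈ range p, a k := by rw [haper.sum_range_mul, nsmul_eq_mul]
    _ ≤ (s / ω + 1) * ∑ k ∈ range p, a k :=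
        mul_le_mul_of_nonneg_right (Nat.ceil_lt_add_one (by positivity)).le
          (sum_nonneg fun k _ => ha k)

end ImpulseTimes

theorem tendsto_zero_of_le_mul_exp_neg {f : ℝ → ℝ} {C σ : ℝ} (hσ : 0 < σ)
    (hf₀ : ∀ t, 0 ≤ t → 0 ≤ f t) (hf : ∀ t, 0 ≤ t → f t ≤ C * exp (-σ * t)) :
    Tendsto f atTop (𝓝 0) := by
  have hexp : Tendsto (fun t => C * exp (-σ * t)) atTop (𝓝 0) := by
    simpa using (tendsto_exp_atBot.comp
      (tendsto_id.const_mul_atTop_of_neg (neg_neg_of_pos hσ))).const_mul C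
  exact tendsto_of_tendsto_of_tendsto_of_le_of_le' tendsto_const_nhds hexp
    (eventually_ge_atTop 0 |>.mono hf₀) (eventually_ge_atTop 0 |>.mono hf)

theorem stmt12_general (M ν₀ ω r c₁ c₂ : ℝ) (p : ℕ) (hp : 0 < p)
    (hM : 1 ≤ M) (hω : 0 < ω)
    (a : ℕ → ℝ) (ha : ∀ k, 0 ≤ a k) (haper : ∀ k, a (k + p) = a k)
    (tseq : ℕ → ℝ)
    (htbase : ∀ k < p, 0 < tseq k ∧ tseq k < ω)
    (htper : ∀ k, tseq (k + p) = tseq k + ω)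
    (hfin : ∀ t : ℝ, {k : ℕ | tseq k < t}.Finite)
    (hcond : (c₁ + c₂ * Real.exp (-ν₀ * r)) + (1 / ω) * ∑ k ∈ Finset.range p, a k
      < (-ν₀) / M)
    (σ : ℝ)
    (hσ : σ = -ν₀ - (M / ω) * (∑ k ∈ Finset.range p, a k)
      - M * (c₁ + c₂ * Real.exp (-ν₀ * r))) :
    0 < σ ∧
    ∀ (Δ : ℝ → ℝ) (C : ℝ), 0 ≤ C → (∀ t : ℝ, 0 ≤ t → 0 ≤ Δ t) →
      (∀ t : ℝ, 0 ≤ t →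
        Δ t ≤ C * (∏ k ∈ (hfin t).toFinset, (1 + M * a k))
          * Real.exp ((M * (c₁ + c₂ * Real.exp (-ν₀ * r)) + ν₀) * t)) →
      ∃ C' : ℝ, 0 ≤ C' ∧ ∃ σ' : ℝ, 0 < σ' ∧
        (∀ t : ℝ, 0 ≤ t → Δ t ≤ C' * Real.exp (-σ' * t)) ∧
        Filter.Tendsto Δ Filter.atTop (nhds 0) := by
  set E := c₁ + c₂ * exp (-ν₀ * r)
  set S := ∑ k ∈ range p, a k
  have hM₀ : 0 < M := zero_lt_one.trans_le hM
  have hσpos : 0 < σ := by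
    have h := (lt_div_iff₀ hM₀).mp hcond
    have hσ' : σ = -ν₀ - (E + 1 / ω * S) * M := by rw [hσ]; ring
    linarith
  refine ⟨hσpos, fun Δ C hC hΔ₀ hΔ => ?_⟩
  have hdecay : ∀ t, 0 ≤ t → Δ t ≤ C * exp (M * S) * exp (-σ * t) := by
    intro t ht
    have hprod : ∏ k ∈ (hfin t).toFinset, (1 + M * a k) ≤ exp (M * ((t / ω + 1) * S)) := by
      refine (prod_one_add_le_exp_sum _ fun k => mul_nonneg hM₀.le (ha k)).trans ?_
      rw [exp_le_exp, ← mul_sum]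
      exact mul_le_mul_of_nonneg_left (sum_setOf_lt_le hp hω (fun k hk => (htbase k hk).1.le)
        htper ha haper ht (hfin t)) hM₀.le
    calc Δ t ≤ C * (∏ k ∈ (hfin t).toFinset, (1 + M * a k)) * exp ((M * E + ν₀) * t) := hΔ t ht
      _ ≤ C * exp (M * ((t / ω + 1) * S)) * exp ((M * E + ν₀) * t) := by gcongr
      _ = C * exp (M * S) * exp (-σ * t) := by
        rw [mul_assoc, mul_assoc, ← exp_add, ← exp_add, hσ]
        congr 2
        field_simp
        ring
  exact ⟨C * exp (M * S), by positivity, σ, hσpos, hdecay,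
    tendsto_zero_of_le_mul_exp_neg hσpos hΔ₀ hdecay⟩

/-- Decay estimate in the asymptotic stability argument: under
`(c₁ + c₂e^{-ν₀r}) + (1/ω)∑a_k < |ν₀|/M`, the exponent
`σ = -ν₀ - (M/ω)∑a_k - M(c₁+c₂e^{-ν₀r})` is positive, and any nonnegative `Δ`
dominated by `C ∏_{0<t_k<t}(1+Ma_k) e^{(M(c₁+c₂e^{-ν₀r})+ν₀)t}` decays exponentially
to `0`. -/
theorem stmt12 (M ν₀ ω r c₁ c₂ : ℝ) (p : ℕ) (hp : 0 < p)
    (hM : 1 ≤ M) (hν₀ : ν₀ < 0) (hω : 0 < ω) (hr : 0 < r)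
    (hc₁ : 0 ≤ c₁) (hc₂ : 0 ≤ c₂)
    (a : ℕ → ℝ) (ha : ∀ k, 0 ≤ a k) (haper : ∀ k, a (k + p) = a k)
    (tseq : ℕ → ℝ) (htmono : StrictMono tseq)
    (htbase : ∀ k < p, 0 < tseq k ∧ tseq k < ω)
    (htper : ∀ k, tseq (k + p) = tseq k + ω)
    (hfin : ∀ t : ℝ, {k : ℕ | tseq k < t}.Finite)
    (hcond : (c₁ + c₂ * Real.exp (-ν₀ * r)) + (1 / ω) * ∑ k ∈ Finset.range p, a k
      < (-ν₀) / M)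
    (σ : ℝ)
    (hσ : σ = -ν₀ - (M / ω) * (∑ k ∈ Finset.range p, a k)
      - M * (c₁ + c₂ * Real.exp (-ν₀ * r))) :
    0 < σ ∧
    ∀ (Δ : ℝ → ℝ) (C : ℝ), 0 ≤ C → (∀ t : ℝ, 0 ≤ t → 0 ≤ Δ t) →
      (∀ t : ℝ, 0 ≤ t →
        Δ t ≤ C * (∏ k ∈ (hfin t).toFinset, (1 + M * a k))
          * Real.exp ((M * (c₁ + c₂ * Real.exp (-ν₀ * r)) + ν₀) * t)) →
      ∃ C' : ℝ, 0 ≤ C' ∧ ∃ σ' : ℝ, 0 < σ' ∧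
        (∀ t : ℝ, 0 ≤ t → Δ t ≤ C' * Real.exp (-σ' * t)) ∧
        Filter.Tendsto Δ Filter.atTop (nhds 0) :=
  stmt12_general M ν₀ ω r c₁ c₂ p hp hM hω a ha haper tseq htbase htper hfin hcond σ hσ
end

section
/- Let X be a Banach space, T(t), t ≥ 0, a C₀-semigroup on X, ω > 0, h : [0,∞) → X piecewise continuous, 0 < t₁ < t₂ < ⋯ a strictly increasing sequence of impulse times, v_k ∈ X, and define u(t) = T(t)x₀ + ∫₀ᵗ T(t-s)h(s) ds + ∑_{0 < t_k < t} T(t - t_k) v_k. Suppose h(t + ω) = h(t) for all t ≥ 0, t_{k+p} = t_k + ω and v_{k+p} = v_k for all k, exactly p impulse points lie in (0, ω), and x₀ satisfies (I - T(ω)) x₀ = ∫₀^ω T(ω - s) h(s) ds + ∑_{k=1}^{p} T(ω - t_k) v_k. Then u(t + ω) = u(t) for all t ≥ 0. -/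
/-!
Splitting `[0, t + ω]` at `ω`, the semigroup law factors `T t` out of every contribution
of `[0, ω]` to `u (t + ω)`: of the initial term, of the integral over `[0, ω]` and of the
`p` impulses in `(0, ω)`. By the condition on `x₀` these three add up to `T t x₀`. What is
left, the integral over `[ω, t + ω]` and the impulses in `[ω, t + ω)`, becomes the rest of
`u t` after the substitution `s ↦ s + ω` and the reindexing `k ↦ k + p`, by periodicity of
`h`, of `tₖ` and of `vₖ`.
-/

open MeasureTheory intervalIntegral Set Filter

section Caratheodory

variable {α 𝕜 E F : Type*} [MeasurableSpace α] {μ : Measure α} [NontriviallyNormedField 𝕜]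
  [NormedAddCommGroup E] [NormedSpace 𝕜 E] [NormedAddCommGroup F] [NormedSpace 𝕜 F]
  {G : α → E →L[𝕜] F} {f : α → E}

/-- Only measurability of `a ↦ G a` in the strong operator topology is assumed, not in operator
norm: a strongly continuous semigroup is rarely norm-measurable. -/
theorem MeasureTheory.AEStronglyMeasurable.clm_apply_of_forall
    (hG : ∀ y, AEStronglyMeasurable (fun a => G a y) μ) (hf : AEStronglyMeasurable f μ) :
    AEStronglyMeasurable (fun a => G a (f a)) μ := by
  have hsimple : ∀ φ : SimpleFunc α E, AEStronglyMeasurable (fun a => G a (φ a)) μ := by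
    intro φ
    induction φ using SimpleFunc.induction with
    | @const y s hs =>
      convert (hG y).indicator hs using 1
      ext a
      by_cases ha : a ∈ s <;> simp [ha]
    | add _ hφ hψ =>
      simp only [SimpleFunc.coe_add, Pi.add_apply, map_add]
      exact hφ.add hψ
  have hf' := hf.stronglyMeasurable_mk
  refine (aestronglyMeasurable_of_tendsto_ae atTop (fun n => hsimple (hf'.approx n))
    (ae_of_all _ fun a => ((G a).continuous.tendsto _).comp (hf'.tendsto_approx a))).congr ?_
  filter_upwards [hf.ae_eq_mk] with a ha
  rw [ha]

theorem MeasureTheory.Integrable.clm_apply_of_forall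
    (hG : ∀ y, AEStronglyMeasurable (fun a => G a y) μ) {C : ℝ} (hC : ∀ᵐ a ∂μ, ‖G a‖ ≤ C)
    (hf : Integrable f μ) : Integrable (fun a => G a (f a)) μ :=
  (hf.norm.const_mul C).mono' (hf.aestronglyMeasurable.clm_apply_of_forall hG) <| by
    filter_upwards [hC] with a ha using (G a).le_of_opNorm_le ha _

end Caratheodory

theorem IsCompact.exists_opNorm_le_of_continuousOn {ι 𝕜 E F : Type*} [TopologicalSpace ι]
    [NontriviallyNormedField 𝕜] [NormedAddCommGroup E] [NormedSpace 𝕜 E] [CompleteSpace E]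
    [NormedAddCommGroup F] [NormedSpace 𝕜 F] {K : Set ι} (hK : IsCompact K)
    {T : ι → E →L[𝕜] F} (hT : ∀ x, ContinuousOn (fun t => T t x) K) :
    ∃ C, ∀ t ∈ K, ‖T t‖ ≤ C := by
  obtain ⟨C, hC⟩ := banach_steinhaus (g := fun t : K => T t) fun x =>
    (hK.exists_bound_of_continuousOn (hT x)).imp fun _ hC t => hC t t.2
  exact ⟨C, fun t ht => hC ⟨t, ht⟩⟩

section Impulses

variable {tseq : ℕ → ℝ} {p : ℕ} {ω : ℝ} (hfin : ∀ t : ℝ, {k : ℕ | tseq k < t}.Finite)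
  (htbase : ∀ k < p, tseq k < ω) (htper : ∀ k, tseq (k + p) = tseq k + ω)
include htbase htper

theorem toFinset_lt_add_period {t : ℝ} (ht : 0 ≤ t) :
    (hfin (t + ω)).toFinset = Finset.range p ∪ (hfin t).toFinset.map (addRightEmbedding p) := by
  ext k
  simp only [Set.Finite.mem_toFinset, mem_ofPred_eq, Finset.mem_union, Finset.mem_range,
    Finset.mem_map, addRightEmbedding_apply]
  constructor
  · intro hk
    rcases lt_or_ge k p with hkp | hpk
    · exact Or.inl hkp
    · obtain ⟨j, rfl⟩ := Nat.exists_eq_add_of_le' hpk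
      exact Or.inr ⟨j, by linarith [htper j], rfl⟩
  · rintro (hkp | ⟨j, hj, rfl⟩)
    · linarith [htbase k hkp]
    · linarith [htper j]

theorem sum_toFinset_lt_add_period {M : Type*} [AddCommMonoid M] (g : ℕ → M) {t : ℝ}
    (ht : 0 ≤ t) :
    ∑ k ∈ (hfin (t + ω)).toFinset, g k
      = ∑ k ∈ Finset.range p, g k + ∑ j ∈ (hfin t).toFinset, g (j + p) := by
  have hdisj : Disjoint (Finset.range p) ((hfin t).toFinset.map (addRightEmbedding p)) :=
    Finset.disjoint_left.2 fun k hk hk' => by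
      obtain ⟨j, -, rfl⟩ := Finset.mem_map.1 hk'
      simp at hk
  rw [toFinset_lt_add_period hfin htbase htper ht, Finset.sum_union hdisj, Finset.sum_map]
  rfl

end Impulses

section Semigroup

variable {X : Type*} [NormedAddCommGroup X] [NormedSpace ℝ X] {T : ℝ → X →L[ℝ] X}

theorem intervalIntegrable_apply_sub [CompleteSpace X]
    (hTcont : ∀ x : X, ContinuousOn (fun t => T t x) (Ici 0)) {h : ℝ → X} {c : ℝ}
    (hc : 0 ≤ c) (hh : IntervalIntegrable h volume 0 c) :
    IntervalIntegrable (fun s => T (c - s) (h s)) volume 0 c := by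
  rw [intervalIntegrable_iff_integrableOn_Icc_of_le hc] at hh ⊢
  have hmaps : MapsTo (fun s => c - s) (Icc 0 c) (Icc 0 c) :=
    fun s hs => ⟨by linarith [hs.2], by linarith [hs.1]⟩
  obtain ⟨C, hC⟩ := isCompact_Icc.exists_opNorm_le_of_continuousOn
    fun x => (hTcont x).mono Icc_subset_Ici_self
  refine hh.clm_apply_of_forall (C := C) (fun y => ?_) ?_
  · exact ((hTcont y).comp (continuousOn_const.sub continuousOn_id)
      fun s hs => (hmaps hs).1).aestronglyMeasurable measurableSet_Icc
  · exact ae_restrict_of_forall_mem measurableSet_Icc fun s hs => hC _ (hmaps hs)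

variable (hTadd : ∀ s t : ℝ, 0 ≤ s → 0 ≤ t → T (s + t) = T s ∘L T t)
include hTadd

theorem apply_add_sub_eq_apply_apply {t ω s : ℝ} (ht : 0 ≤ t) (hs : s ≤ ω) (x : X) :
    T (t + ω - s) x = T t (T (ω - s) x) := by
  rw [add_sub_assoc, hTadd t (ω - s) ht (sub_nonneg.2 hs), ContinuousLinearMap.comp_apply]

theorem integral_apply_sub_add_period [CompleteSpace X]
    (hTcont : ∀ x : X, ContinuousOn (fun t => T t x) (Ici 0)) {h : ℝ → X} {ω t : ℝ}
    (hω : 0 ≤ ω) (ht : 0 ≤ t) (hhper : ∀ s, 0 ≤ s → h (s + ω) = h s)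
    (hh : IntervalIntegrable h volume 0 (t + ω)) :
    ∫ s in 0..t + ω, T (t + ω - s) (h s)
      = T t (∫ s in 0..ω, T (ω - s) (h s)) + ∫ s in 0..t, T (t - s) (h s) := by
  have hI := intervalIntegrable_apply_sub hTcont (add_nonneg ht hω) hh
  have hsub₁ : uIcc 0 ω ⊆ uIcc 0 (t + ω) := by
    simpa only [uIcc_of_le, hω, add_nonneg ht hω] using Icc_subset_Icc_right (by linarith)
  have hsub₂ : uIcc ω (t + ω) ⊆ uIcc 0 (t + ω) := by
    rw [uIcc_of_le (le_add_of_nonneg_left ht), uIcc_of_le (add_nonneg ht hω)]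
    exact Icc_subset_Icc_left hω
  rw [← integral_add_adjacent_intervals (hI.mono_set hsub₁) (hI.mono_set hsub₂)]
  congr 1
  · rw [← (T t).intervalIntegral_comp_comm
      (intervalIntegrable_apply_sub hTcont hω (hh.mono_set hsub₁))]
    refine integral_congr fun s hs => ?_
    rw [uIcc_of_le hω] at hs
    exact apply_add_sub_eq_apply_apply hTadd ht hs.2 _
  · have hshift := integral_comp_add_right (fun s => T (t + ω - s) (h s)) ω (a := 0) (b := t)
    rw [zero_add] at hshift
    rw [← hshift]
    refine integral_congr fun s hs => ?_
    rw [uIcc_of_le ht] at hs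
    simp only [add_sub_add_right_eq_sub, hhper s hs.1]

theorem sum_impulses_add_period {tseq : ℕ → ℝ} {p : ℕ} {ω t : ℝ}
    (hfin : ∀ t : ℝ, {k : ℕ | tseq k < t}.Finite) (htbase : ∀ k < p, tseq k < ω)
    (htper : ∀ k, tseq (k + p) = tseq k + ω) {v : ℕ → X} (hvper : ∀ k, v (k + p) = v k)
    (ht : 0 ≤ t) :
    ∑ k ∈ (hfin (t + ω)).toFinset, T (t + ω - tseq k) (v k)
      = T t (∑ k ∈ Finset.range p, T (ω - tseq k) (v k))
        + ∑ k ∈ (hfin t).toFinset, T (t - tseq k) (v k) := by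
  rw [sum_toFinset_lt_add_period hfin htbase htper _ ht, map_sum]
  congr 1
  · exact Finset.sum_congr rfl fun k hk =>
      apply_add_sub_eq_apply_apply hTadd ht (htbase k (Finset.mem_range.1 hk)).le _
  · refine Finset.sum_congr rfl fun j _ => ?_
    rw [htper, hvper, add_sub_add_right_eq_sub]

end Semigroup

theorem stmt14_general {X : Type*} [NormedAddCommGroup X] [NormedSpace ℝ X] [CompleteSpace X]
    (T : ℝ → X →L[ℝ] X) (ω : ℝ) (hω : 0 < ω)
    (hTadd : ∀ s t : ℝ, 0 ≤ s → 0 ≤ t → T (s + t) = T s ∘L T t)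
    (hTcont : ∀ x : X, ContinuousOn (fun t => T t x) (Set.Ici (0 : ℝ)))
    (h : ℝ → X) (hhper : ∀ t : ℝ, 0 ≤ t → h (t + ω) = h t)
    (hhint : ∀ a b : ℝ, IntervalIntegrable h volume a b)
    (p : ℕ)
    (tseq : ℕ → ℝ)
    (htbase : ∀ k < p, 0 < tseq k ∧ tseq k < ω)
    (htper : ∀ k, tseq (k + p) = tseq k + ω)
    (hfin : ∀ t : ℝ, {k : ℕ | tseq k < t}.Finite)
    (v : ℕ → X) (hvper : ∀ k, v (k + p) = v k)
    (x₀ : X)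
    (hx₀ : x₀ - T ω x₀ = (∫ s in (0 : ℝ)..ω, T (ω - s) (h s))
      + ∑ k ∈ Finset.range p, T (ω - tseq k) (v k))
    (u : ℝ → X)
    (hu : u = fun t => T t x₀ + (∫ s in (0 : ℝ)..t, T (t - s) (h s))
      + ∑ k ∈ (hfin t).toFinset, T (t - tseq k) (v k)) :
    ∀ t : ℝ, 0 ≤ t → u (t + ω) = u t := by
  intro t ht
  have hx₀' : T t x₀ = T t (T ω x₀) + T t (∫ s in (0 : ℝ)..ω, T (ω - s) (h s))
      + T t (∑ k ∈ Finset.range p, T (ω - tseq k) (v k)) := by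
    rw [← map_add, ← map_add, add_assoc, ← hx₀, add_sub_cancel]
  subst hu
  beta_reduce
  rw [hTadd t ω ht hω.le, ContinuousLinearMap.comp_apply,
    integral_apply_sub_add_period hTadd hTcont hω.le ht hhper (hhint _ _),
    sum_impulses_add_period hTadd hfin (fun k hk => (htbase k hk).2) htper hvper ht, hx₀']
  abel

/-- If the initial value `x₀` satisfies
`(I-T(ω))x₀ = ∫₀^ω T(ω-s)h(s)ds + ∑_{k=1}^p T(ω-t_k)v_k`, then the mild solution
`u(t) = T(t)x₀ + ∫₀ᵗ T(t-s)h(s)ds + ∑_{0<t_k<t} T(t-t_k)v_k` of the impulsive linear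
equation is `ω`-periodic on `[0,∞)`. -/
theorem stmt14 {X : Type*} [NormedAddCommGroup X] [NormedSpace ℝ X] [CompleteSpace X]
    (T : ℝ → X →L[ℝ] X) (ω : ℝ) (hω : 0 < ω)
    (hT0 : T 0 = 1)
    (hTadd : ∀ s t : ℝ, 0 ≤ s → 0 ≤ t → T (s + t) = T s ∘L T t)
    (hTcont : ∀ x : X, ContinuousOn (fun t => T t x) (Set.Ici (0 : ℝ)))
    (h : ℝ → X) (hhper : ∀ t : ℝ, 0 ≤ t → h (t + ω) = h t)
    (hhint : ∀ a b : ℝ, IntervalIntegrable h volume a b)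
    (p : ℕ) (hp : 0 < p)
    (tseq : ℕ → ℝ) (htmono : StrictMono tseq)
    (htbase : ∀ k < p, 0 < tseq k ∧ tseq k < ω)
    (htper : ∀ k, tseq (k + p) = tseq k + ω)
    (hfin : ∀ t : ℝ, {k : ℕ | tseq k < t}.Finite)
    (v : ℕ → X) (hvper : ∀ k, v (k + p) = v k)
    (x₀ : X)
    (hx₀ : x₀ - T ω x₀ = (∫ s in (0 : ℝ)..ω, T (ω - s) (h s))
      + ∑ k ∈ Finset.range p, T (ω - tseq k) (v k))
    (u : ℝ → X)
    (hu : u = fun t => T t x₀ + (∫ s in (0 : ℝ)..t, T (t - s) (h s))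
      + ∑ k ∈ (hfin t).toFinset, T (t - tseq k) (v k)) :
    ∀ t : ℝ, 0 ≤ t → u (t + ω) = u t :=
  stmt14_general T ω hω hTadd hTcont h hhper hhint p tseq htbase htper hfin v hvper x₀ hx₀ u hu
end
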